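/- arXiv:2104.09096 — 2 statements merged into one kernel-verified Lean document; each statement's English description precedes it below -/
import Mathlib

section
/- For every finite graph G with no isolated vertices, the matching cover number of G is at most max(2, L), where L is the minimum NAF load of G. In particular, if L ≥ 2 then mc(G) ≤ L. -/
/-- `M` is a matching of `G`: a set of edges of `G` that are pairwise vertex-disjoint. -/
def IsMatching {V : Type*} (G : SimpleGraph V) (M : Finset (Sym2 V)) : Prop :=
  (∀ e ∈ M, e ∈ G.edgeSet) ∧
  ∀ e ∈ M, ∀ f ∈ M, e ≠ f → ∀ v : V, ¬(v ∈ e ∧ v ∈ f)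

/-- A family of `k` matchings of `G` whose union covers every vertex. -/
def IsMatchingCover {V : Type*} (G : SimpleGraph V) (k : ℕ)
    (Ms : Fin k → Finset (Sym2 V)) : Prop :=
  (∀ i, IsMatching G (Ms i)) ∧ ∀ v : V, ∃ i, ∃ e ∈ Ms i, v ∈ e

/-- The matching cover number of `G`: the least `k` for which `k` matchings of `G`
cover all vertices. -/
noncomputable def matchingCoverNumber {V : Type*} (G : SimpleGraph V) : ℕ :=
  sInf {k : ℕ | ∃ Ms : Fin k → Finset (Sym2 V), IsMatchingCover G k Ms}

/-- A neighbor assignment function (NAF): each vertex is assigned to one of its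
neighbors. -/
def IsNAF {V : Type*} (G : SimpleGraph V) (f : V → V) : Prop :=
  ∀ v : V, G.Adj v (f v)

/-- The load of a NAF: the maximum size of a fiber of `f`. -/
def nafLoad {V : Type*} [Fintype V] [DecidableEq V] (f : V → V) : ℕ :=
  Finset.univ.sup (fun v => (Finset.univ.filter (fun u => f u = v)).card)

/-- The minimum NAF load of `G`. -/
noncomputable def minNafLoad {V : Type*} [Fintype V] [DecidableEq V]
    (G : SimpleGraph V) : ℕ :=
  sInf {k : ℕ | ∃ f : V → V, IsNAF G f ∧ nafLoad f = k}

/-!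
Fix a NAF `f` of load at most `K = max 2 L`. We repeatedly split off a set `B` of vertices into
which no `f`-edge enters from outside, so that `f` remains a NAF of load at most `K` on the rest.
Either `B` is a vertex `c` together with its fibre `f⁻¹(c)`, which is a star with at most `K`
leaves and is covered by `K` matchings of one edge each; or `B` is a periodic orbit of `f`,
whose path `z, f z, f² z, …` splits into stars with one or two leaves (this is where `K ≥ 2`
enters). Descending the in-tree of a non-periodic vertex that has a preimage reaches a star that
can be split off. If some `u` has no preimage but the star at `f u` cannot be split off,
redefining `f` at `f u` to be `u` keeps the load at most `K` and produces such a non-periodic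
vertex. If neither case applies, every vertex is periodic and an orbit is split off.
-/

open Finset Function

section

variable {V : Type*} {G : SimpleGraph V} {k : ℕ}

theorem isMatching_of_card_le_one {M : Finset (Sym2 V)} (hG : ∀ e ∈ M, e ∈ G.edgeSet)
    (hM : #M ≤ 1) : IsMatching G M :=
  ⟨hG, fun e he e' he' hne => absurd (card_le_one.1 hM e he e' he') hne⟩

variable (G k) in
def CoverableOn (s : Finset V) : Prop :=
  ∃ Ms : Fin k → Finset (Sym2 V), (∀ i, IsMatching G (Ms i)) ∧
    (∀ i, ∀ e ∈ Ms i, ∀ v ∈ e, v ∈ s) ∧ ∀ v ∈ s, ∃ i, ∃ e ∈ Ms i, v ∈ e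

theorem coverableOn_empty : CoverableOn G k ∅ :=
  ⟨fun _ => ∅, fun _ => isMatching_of_card_le_one (by simp) (by simp), by simp, by simp⟩

theorem CoverableOn.matchingCoverNumber_le [Fintype V] (h : CoverableOn G k univ) :
    matchingCoverNumber G ≤ k := by
  obtain ⟨Ms, hMs, -, hcov⟩ := h
  exact Nat.sInf_le ⟨Ms, hMs, fun v => hcov v (mem_univ v)⟩

variable [DecidableEq V]

theorem IsMatching.union {M N : Finset (Sym2 V)} (hM : IsMatching G M) (hN : IsMatching G N)
    (hMN : ∀ e ∈ M, ∀ e' ∈ N, ∀ v ∈ e, v ∉ e') : IsMatching G (M ∪ N) := by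
  refine ⟨fun e he => (mem_union.1 he).elim (hM.1 e) (hN.1 e), ?_⟩
  rintro e he e' he' hne v ⟨hv, hv'⟩
  rcases mem_union.1 he with he | he <;> rcases mem_union.1 he' with he' | he'
  · exact hM.2 e he e' he' hne v ⟨hv, hv'⟩
  · exact hMN e he e' he' v hv hv'
  · exact hMN e' he' e he v hv' hv
  · exact hN.2 e he e' he' hne v ⟨hv, hv'⟩

theorem CoverableOn.union {s t : Finset V} (hs : CoverableOn G k s) (ht : CoverableOn G k t)
    (hst : Disjoint s t) : CoverableOn G k (s ∪ t) := by
  obtain ⟨Ms, hMs, hMs_sub, hMs_cov⟩ := hs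
  obtain ⟨Ns, hNs, hNs_sub, hNs_cov⟩ := ht
  refine ⟨fun i => Ms i ∪ Ns i, fun i => (hMs i).union (hNs i) fun e he e' he' v hv hv' =>
    disjoint_left.1 hst (hMs_sub i e he v hv) (hNs_sub i e' he' v hv'), ?_, ?_⟩
  · intro i e he v hv
    rcases mem_union.1 he with he | he
    · exact mem_union_left _ (hMs_sub i e he v hv)
    · exact mem_union_right _ (hNs_sub i e he v hv)
  · intro v hv
    rcases mem_union.1 hv with hv | hv
    · obtain ⟨i, e, he, hve⟩ := hMs_cov v hv
      exact ⟨i, e, mem_union_left _ he, hve⟩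
    · obtain ⟨i, e, he, hve⟩ := hNs_cov v hv
      exact ⟨i, e, mem_union_right _ he, hve⟩

theorem coverableOn_star {c : V} {T : Finset V} (hcT : c ∉ T) (hT : T.Nonempty) (hTk : #T ≤ k)
    (hadj : ∀ t ∈ T, G.Adj c t) : CoverableOn G k (insert c T) := by
  set leaf : Fin #T → V := fun i => T.equivFin.symm i
  have leaf_mem (i) : leaf i ∈ T := (T.equivFin.symm i).2
  refine ⟨fun i => if hi : (i : ℕ) < #T then {s(c, leaf ⟨i, hi⟩)} else ∅, fun i => ?_, ?_, ?_⟩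
  · dsimp only
    refine isMatching_of_card_le_one (fun e he => ?_) ?_ <;> split_ifs at * with hi
    · rw [mem_singleton.1 he]; exact hadj _ (leaf_mem _)
    · simp at he
    · simp
    · simp
  · intro i e he v hv
    dsimp only at he
    split_ifs at he with hi
    swap; · simp at he
    rw [mem_singleton.1 he, Sym2.mem_iff] at hv
    rcases hv with rfl | rfl
    · exact mem_insert_self _ _
    · exact mem_insert_of_mem (leaf_mem _)
  · intro v hv
    rcases mem_insert.1 hv with rfl | hvT
    · have h0 : 0 < #T := hT.card_pos
      exact ⟨⟨0, h0.trans_le hTk⟩, s(v, leaf ⟨0, h0⟩), by simp [h0], Sym2.mem_mk_left _ _⟩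
    · set j := T.equivFin ⟨v, hvT⟩
      have hleaf : leaf j = v := by simp [leaf, j]
      refine ⟨⟨j, j.2.trans_le hTk⟩, s(c, v), ?_, Sym2.mem_mk_right _ _⟩
      simp [j.2, ← hleaf]

theorem coverableOn_of_isChain (hk : 2 ≤ k) :
    ∀ {l : List V}, l.Nodup → l.IsChain G.Adj → l.length ≠ 1 → CoverableOn G k l.toFinset
  | [], _, _, _ => coverableOn_empty
  | [_], _, _, h => absurd rfl h
  | [a, b], hl, hc, _ => by
    simpa using coverableOn_star (G := G) (k := k) (c := a) (T := {b}) (by simpa using hl)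
      (singleton_nonempty b) (by simp; omega) (by simpa using hc)
  | [a, b, c], hl, hc, _ => by
    have hset : [a, b, c].toFinset = insert b {a, c} := by
      ext; simp; tauto
    rw [hset]
    simp only [List.nodup_cons, List.mem_cons, List.not_mem_nil] at hl
    simp only [List.isChain_cons_cons, List.IsChain.singleton, and_true] at hc
    refine coverableOn_star (by simp; tauto) (insert_nonempty _ _) ((card_le_two).trans hk) ?_
    simpa using ⟨hc.1.symm, hc.2⟩
  | a :: b :: c :: d :: l, hl, hc, _ => by
    have hset : (a :: b :: c :: d :: l).toFinset = {a, b} ∪ (c :: d :: l).toFinset := by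
      ext; simp; tauto
    rw [hset]
    rw [List.nodup_cons, List.nodup_cons] at hl
    rw [List.isChain_cons_cons, List.isChain_cons_cons] at hc
    refine CoverableOn.union ?_ (coverableOn_of_isChain hk hl.2.2 hc.2.2 (by simp)) ?_
    · refine coverableOn_star (fun h => hl.1 (by simp_all)) (singleton_nonempty b)
        (by simp; omega) (by simpa using hc.1)
    · simp only [disjoint_insert_left, disjoint_singleton_left, List.mem_toFinset]
      exact ⟨fun h => hl.1 (List.mem_cons_of_mem _ h), hl.2.1⟩

theorem Cycle.mem_toFinset {s : Cycle V} {a : V} : a ∈ s.toFinset ↔ a ∈ s :=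
  Quotient.inductionOn' s fun l => by simp

theorem coverableOn_periodicOrbit (hk : 2 ≤ k) {f : V → V} {z : V}
    (hadj : ∀ n, G.Adj (f^[n] z) (f^[n + 1] z)) : CoverableOn G k (periodicOrbit f z).toFinset := by
  rw [periodicOrbit_def, Cycle.coe_toFinset]
  refine coverableOn_of_isChain hk ?_ ?_ ?_
  · exact Cycle.nodup_coe_iff.1 nodup_periodicOrbit
  · exact (List.isChain_map _).2 ((List.isChain_range _ _).2 fun m _ => hadj m)
  · rw [List.length_map, List.length_range]
    intro h1
    have hfix : f z = z := by simpa [h1] using iterate_minimalPeriod (f := f) (x := z)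
    exact (hadj 0).ne (by simpa using hfix.symm)

theorem Function.notMem_periodicPts_of_mapsTo {α : Type*} {f : α → α} {A : Set α} {x : α}
    (hA : Set.MapsTo f A A) (hfx : f x ∈ A) (hx : x ∉ A) : x ∉ periodicPts f := by
  rintro ⟨n, hn, hper⟩
  apply hx
  rw [← hper.eq, ← Nat.sub_add_cancel hn, iterate_add_apply]
  exact hA.iterate _ hfx

theorem Function.mem_periodicOrbit_of_apply_mem {α : Type*} {f : α → α} {z w : α}
    (hz : z ∈ periodicPts f) (hw : w ∈ periodicPts f) (hfw : f w ∈ periodicOrbit f z) :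
    w ∈ periodicOrbit f z := by
  obtain ⟨n, hn⟩ := (mem_periodicOrbit_iff hz).1 hfw
  rw [← periodicOrbit_apply_iterate_eq hz n, hn, periodicOrbit_apply_eq hw]
  exact self_mem_periodicOrbit hw

variable (G k) in
structure IsNAFOn (s : Finset V) (f : V → V) : Prop where
  mapsTo : Set.MapsTo f s s
  adj : ∀ v ∈ s, G.Adj v (f v)
  card_fiber_le : ∀ v, #{u ∈ s | f u = v} ≤ k

/-- The star formed by `c` and its fibre in `s` receives no `f`-edge from the rest of `s`. -/
def IsPendantStarCenter (s : Finset V) (f : V → V) (c : V) : Prop :=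
  (∃ u ∈ s, f u = c) ∧ ∀ w ∈ s, f (f w) = c → w = c

section

variable {s B : Finset V} {f : V → V} {c : V}

theorem IsNAFOn.mono {k' : ℕ} (hf : IsNAFOn G k s f) (hk : k ≤ k') : IsNAFOn G k' s f :=
  ⟨hf.mapsTo, hf.adj, fun v => (hf.card_fiber_le v).trans hk⟩

theorem IsNAFOn.sdiff (hf : IsNAFOn G k s f) (hB : ∀ w ∈ s, f w ∈ B → w ∈ B) :
    IsNAFOn G k (s \ B) f where
  mapsTo w hw := by
    obtain ⟨hws, hwB⟩ := mem_sdiff.1 hw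
    exact mem_sdiff.2 ⟨hf.mapsTo hws, fun h => hwB (hB w hws h)⟩
  adj w hw := hf.adj w (mem_sdiff.1 hw).1
  card_fiber_le v :=
    (card_le_card (filter_subset_filter _ sdiff_subset)).trans (hf.card_fiber_le v)

theorem IsNAFOn.update (hf : IsNAFOn G k s f) (hk : 1 ≤ k) {u : V} (hu : u ∈ s)
    (hleaf : ∀ w ∈ s, f w ≠ u) : IsNAFOn G k s (Function.update f (f u) u) where
  mapsTo w hw := by
    rcases eq_or_ne w (f u) with rfl | hw'
    · simpa using hu
    · simpa [hw'] using hf.mapsTo hw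
  adj w hw := by
    rcases eq_or_ne w (f u) with rfl | hw'
    · simpa using (hf.adj u hu).symm
    · simpa [hw'] using hf.adj w hw
  card_fiber_le v := by
    rcases eq_or_ne v u with rfl | hvu
    · calc #{w ∈ s | Function.update f (f v) v w = v} ≤ #{f v} := card_le_card fun w hw => by
            obtain ⟨hws, hwv⟩ := mem_filter.1 hw
            by_contra h
            exact hleaf w hws (by simpa [mem_singleton.not.1 h] using hwv)
        _ ≤ k := by simpa using hk
    · refine (card_le_card fun w hw => ?_).trans (hf.card_fiber_le v)
      obtain ⟨hws, hwv⟩ := mem_filter.1 hw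
      rcases eq_or_ne w (f u) with rfl | hw'
      · exact absurd (by simpa using hwv.symm) hvu
      · exact mem_filter.2 ⟨hws, by simpa [hw'] using hwv⟩

theorem IsPendantStarCenter.insert_fiber_subset (hs : Set.MapsTo f s s)
    (hc : IsPendantStarCenter s f c) : insert c {u ∈ s | f u = c} ⊆ s := by
  obtain ⟨u, hu, rfl⟩ := hc.1
  exact insert_subset (hs hu) (filter_subset _ _)

theorem IsPendantStarCenter.mem_of_apply_mem (hc : IsPendantStarCenter s f c) {w : V}
    (hw : w ∈ s) (hfw : f w ∈ insert c {u ∈ s | f u = c}) : w ∈ insert c {u ∈ s | f u = c} := by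
  rcases mem_insert.1 hfw with hfw | hfw
  · exact mem_insert_of_mem (mem_filter.2 ⟨hw, hfw⟩)
  · rw [hc.2 w hw (mem_filter.1 hfw).2]
    exact mem_insert_self _ _

theorem IsNAFOn.coverableOn_insert_fiber (hf : IsNAFOn G k s f) (hc : IsPendantStarCenter s f c) :
    CoverableOn G k (insert c {u ∈ s | f u = c}) := by
  obtain ⟨u, hu, hfu⟩ := hc.1
  refine coverableOn_star (fun h => ?_) ⟨u, mem_filter.2 ⟨hu, hfu⟩⟩ (hf.card_fiber_le c) ?_
  · obtain ⟨hcs, hfc⟩ := mem_filter.1 h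
    exact (hf.adj c hcs).ne hfc.symm
  · intro t ht
    obtain ⟨hts, rfl⟩ := mem_filter.1 ht
    exact (hf.adj t hts).symm

theorem exists_isPendantStarCenter_of_notMem_periodicPts (hs : Set.MapsTo f s s) {v : V}
    (hv : v ∈ s) (hvp : v ∉ periodicPts f) (hpre : ∃ u ∈ s, f u = v) :
    ∃ c, IsPendantStarCenter s f c := by
  classical
  induction hn : #{w ∈ s | ∃ n, f^[n] w = v} using Nat.strong_induction_on generalizing v with
  | _ n ih =>
  by_cases hcenter : ∀ w ∈ s, f (f w) = v → w = v
  · exact ⟨v, hpre, hcenter⟩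
  push Not at hcenter
  obtain ⟨w, hws, hwv, -⟩ := hcenter
  have hfwp : f w ∉ periodicPts f := by
    rintro ⟨m, hm, hper⟩
    exact hvp (hwv ▸ mk_mem_periodicPts hm hper.apply)
  refine ih _ ?_ (hs hws) hfwp ⟨w, hws, rfl⟩ rfl
  rw [← hn]
  refine card_lt_card ((ssubset_iff_of_subset fun x hx => ?_).2 ⟨v, ?_, fun hv' => hvp ?_⟩)
  · obtain ⟨hxs, m, hm⟩ := mem_filter.1 hx
    exact mem_filter.2 ⟨hxs, m + 1, by rw [iterate_succ_apply', hm, hwv]⟩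
  · exact mem_filter.2 ⟨hv, 0, rfl⟩
  · obtain ⟨-, m, hm⟩ := mem_filter.1 hv'
    exact mk_mem_periodicPts m.succ_pos
      (by rw [IsPeriodicPt, IsFixedPt, iterate_succ_apply', hm, hwv])

theorem IsNAFOn.exists_isPendantStarCenter_of_leaf (hf : IsNAFOn G k s f) (hk : 1 ≤ k) {u : V}
    (hu : u ∈ s) (hleaf : ∀ w ∈ s, f w ≠ u) :
    ∃ g c, IsNAFOn G k s g ∧ IsPendantStarCenter s g c := by
  by_cases hcenter : ∀ w ∈ s, f (f w) = f u → w = f u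
  · exact ⟨f, f u, hf, ⟨u, hu, rfl⟩, hcenter⟩
  push Not at hcenter
  obtain ⟨w, hws, hwu, hw⟩ := hcenter
  set g := Function.update f (f u) u
  have hg := hf.update hk hu hleaf
  have hfw : f w ≠ f u := fun h => (hf.adj (f u) (hf.mapsTo hu)).ne (by rw [← h, hwu, h])
  have hgw : g w = f w := update_of_ne hw _ _
  -- redirecting `f u` to `u` closes the 2-cycle `{f u, u}`, which `f w` enters but does not lie on
  have hfwp : f w ∉ periodicPts g := by
    refine notMem_periodicPts_of_mapsTo (A := {f u, u}) ?_ ?_ ?_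
    · have hu' : u ≠ f u := (hf.adj u hu).ne
      rintro x (rfl | rfl) <;> simp [g, hu']
    · simp [g, hfw, hwu]
    · simp [hfw, hleaf w hws]
  obtain ⟨c, hc⟩ := exists_isPendantStarCenter_of_notMem_periodicPts hg.mapsTo
    (hf.mapsTo hws) hfwp ⟨w, hws, hgw⟩
  exact ⟨g, c, hg, hc⟩

theorem IsNAFOn.coverableOn (hk : 2 ≤ k) (hf : IsNAFOn G k s f) : CoverableOn G k s := by
  induction hn : #s using Nat.strong_induction_on generalizing s f with
  | _ n ih =>
  subst hn
  have of_block {g : V → V} {B : Finset V} (hg : IsNAFOn G k s g) (hBs : B ⊆ s) (hB : B.Nonempty)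
      (hclosed : ∀ w ∈ s, g w ∈ B → w ∈ B) (hcov : CoverableOn G k B) : CoverableOn G k s := by
    rw [← union_sdiff_of_subset hBs]
    exact hcov.union (ih _ (card_lt_card (sdiff_ssubset hBs hB)) (hg.sdiff hclosed) rfl)
      disjoint_sdiff
  have of_center {g : V → V} {c : V} (hg : IsNAFOn G k s g) (hc : IsPendantStarCenter s g c) :
      CoverableOn G k s :=
    of_block hg (hc.insert_fiber_subset hg.mapsTo) (insert_nonempty _ _)
      (fun _ => hc.mem_of_apply_mem) (hg.coverableOn_insert_fiber hc)
  rcases s.eq_empty_or_nonempty with rfl | ⟨v, hv⟩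
  · exact coverableOn_empty
  by_cases hleaf : ∃ u ∈ s, ∀ w ∈ s, f w ≠ u
  · obtain ⟨u, hu, hleaf⟩ := hleaf
    obtain ⟨g, c, hg, hc⟩ := hf.exists_isPendantStarCenter_of_leaf (by omega) hu hleaf
    exact of_center hg hc
  push Not at hleaf
  by_cases hper : ∃ v ∈ s, v ∉ periodicPts f
  · obtain ⟨v, hv, hvp⟩ := hper
    obtain ⟨c, hc⟩ :=
      exists_isPendantStarCenter_of_notMem_periodicPts hf.mapsTo hv hvp (hleaf v hv)
    exact of_center hf hc
  push Not at hper
  refine of_block hf (fun y hy => ?_)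
    ⟨v, Cycle.mem_toFinset.2 (self_mem_periodicOrbit (hper v hv))⟩ (fun w hw hfw => ?_)
    (coverableOn_periodicOrbit hk fun n => ?_)
  · obtain ⟨n, rfl⟩ := (mem_periodicOrbit_iff (hper v hv)).1 (Cycle.mem_toFinset.1 hy)
    exact hf.mapsTo.iterate n hv
  · exact Cycle.mem_toFinset.2 <|
      mem_periodicOrbit_of_apply_mem (hper v hv) (hper w hw) (Cycle.mem_toFinset.1 hfw)
  · rw [iterate_succ_apply']
    exact hf.adj _ (hf.mapsTo.iterate n hv)

end

theorem exists_isNAF_nafLoad_eq_minNafLoad [Fintype V] (hiso : ∀ v, ∃ w, G.Adj v w) :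
    ∃ f, IsNAF G f ∧ nafLoad f = minNafLoad G := by
  choose f hf using hiso
  exact Nat.sInf_mem (s := {k | ∃ f, IsNAF G f ∧ nafLoad f = k}) ⟨_, f, hf, rfl⟩

theorem IsNAF.isNAFOn_univ [Fintype V] {f : V → V} (hf : IsNAF G f) :
    IsNAFOn G (nafLoad f) univ f where
  mapsTo _ _ := mem_coe.2 (mem_univ _)
  adj v _ := hf v
  card_fiber_le v := le_sup (f := fun v => #{u | f u = v}) (mem_univ v)

end

/-- The matching cover number of a finite graph with no isolated vertices is at most
`max 2 L`, where `L` is the minimum NAF load. In particular if `L ≥ 2` then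
`mc(G) ≤ L`. -/
theorem matchingCoverNumber_le_max_two_minNafLoad {V : Type*} [Fintype V] [DecidableEq V]
    (G : SimpleGraph V) (hiso : ∀ v : V, ∃ w, G.Adj v w) :
    matchingCoverNumber G ≤ max 2 (minNafLoad G) ∧
    (2 ≤ minNafLoad G → matchingCoverNumber G ≤ minNafLoad G) := by
  obtain ⟨f, hf, hload⟩ := exists_isNAF_nafLoad_eq_minNafLoad hiso
  have hmc : matchingCoverNumber G ≤ max 2 (minNafLoad G) :=
    CoverableOn.matchingCoverNumber_le <|
      (hf.isNAFOn_univ.mono (hload ▸ le_max_right _ _)).coverableOn (le_max_left _ _)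
  exact ⟨hmc, fun h => max_eq_right h ▸ hmc⟩
end

section
/- For every finite graph G with no isolated vertices, the minimum NAF load equals the matching cover number, unless the minimum NAF load equals 1, in which case the matching cover number is 1 or 2. -/
/-!
A NAF `f` of load at most `k ≥ 2` yields a spanning star forest whose stars have at most `k`
leaves; colouring the leaves of each star injectively with `k` colours makes every colour class
a matching, and these `k` matchings cover all vertices. The star forest comes from an extremal
argument: among star forests with at most `k` leaves per star, where trivial one-vertex stars
are allowed, take one minimising twice the number of trivial stars plus the number of leaves `u`
not attached to `f u`. A trivial star `v` can always be attached to `w = f v`, possibly after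
detaching a leaf `u` of `w` with `f u ≠ w` (if the star of `w` is full), or after detaching `w`
from its centre `y` and, if `w` was the only leaf of `y`, re-centring `{y, w}` at `w`; each of
these moves lowers the potential. Conversely, `k` matchings covering `V` give a NAF of load at
most `k`, sending each vertex to its partner in a matching that covers it.
-/

open Finset Function

section MatchingCover

variable {V : Type*} {G : SimpleGraph V} {k : ℕ} {Ms : Fin k → Finset (Sym2 V)}

lemma matchingCoverNumber_le (h : IsMatchingCover G k Ms) : matchingCoverNumber G ≤ k :=
  Nat.sInf_le ⟨Ms, h⟩

lemma IsMatchingCover.exists_matchingCoverNumber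
    (h : IsMatchingCover G k Ms) : ∃ Mc, IsMatchingCover G (matchingCoverNumber G) Mc :=
  Nat.sInf_mem (s := {k | ∃ Ms, IsMatchingCover G k Ms}) ⟨k, Ms, h⟩

lemma matchingCoverNumber_eq_zero_of_isEmpty [IsEmpty V] (G : SimpleGraph V) :
    matchingCoverNumber G = 0 :=
  Nat.eq_zero_of_le_zero <|
    matchingCoverNumber_le (Ms := Fin.elim0) ⟨fun i => i.elim0, isEmptyElim⟩

end MatchingCover

lemma Finset.exists_injOn_lt_card {α : Type*} [DecidableEq α] (s : Finset α) :
    ∃ φ : α → ℕ, Set.InjOn φ s ∧ ∀ u ∈ s, φ u < #s := by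
  refine ⟨fun u => if h : u ∈ s then s.equivFin ⟨u, h⟩ else 0, fun a ha b hb hab => ?_,
    fun u hu => by simp [hu]⟩
  simp only [mem_coe] at ha hb
  simp only [ha, hb, dite_true, Fin.val_inj, EmbeddingLike.apply_eq_iff_eq] at hab
  exact congrArg Subtype.val hab

section NAF

variable {V : Type*} [Fintype V] [DecidableEq V] {G : SimpleGraph V} {f : V → V} {k : ℕ}

lemma card_fiber_le_nafLoad (f : V → V) (y : V) : #{u | f u = y} ≤ nafLoad f :=
  le_sup (f := fun y => #{u | f u = y}) (mem_univ y)

lemma one_le_nafLoad (f : V → V) (v : V) : 1 ≤ nafLoad f :=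
  (card_pos.2 ⟨v, by simp⟩).trans_le (card_fiber_le_nafLoad f (f v))

lemma minNafLoad_le (hf : IsNAF G f) : minNafLoad G ≤ nafLoad f := Nat.sInf_le ⟨f, hf, rfl⟩

lemma exists_nafLoad_eq_minNafLoad (hiso : ∀ v, ∃ w, G.Adj v w) :
    ∃ f, IsNAF G f ∧ nafLoad f = minNafLoad G :=
  Nat.sInf_mem (s := {k | ∃ f, IsNAF G f ∧ nafLoad f = k})
    ⟨_, fun v => (hiso v).choose, fun v => (hiso v).choose_spec, rfl⟩

theorem IsMatchingCover.exists_isNAF_nafLoad_le {Ms : Fin k → Finset (Sym2 V)}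
    (h : IsMatchingCover G k Ms) : ∃ f, IsNAF G f ∧ nafLoad f ≤ k := by
  choose i e he hve using h.2
  refine ⟨fun v => Sym2.Mem.other (hve v), fun v => ?_, Finset.sup_le fun w _ => ?_⟩
  · have := (h.1 (i v)).1 _ (he v)
    rwa [← Sym2.other_spec (hve v), SimpleGraph.mem_edgeSet] at this
  -- Two vertices sent to `w` by edges of the same matching use the same edge, hence coincide.
  refine (card_le_card_of_injOn i (fun _ _ => mem_univ _) fun u hu u' hu' hii => ?_).trans
    (by simp)
  simp only [coe_filter, mem_univ, true_and, Set.mem_ofPred_eq] at hu hu'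
  have hwu : s(u, w) = e u := hu ▸ Sym2.other_spec (hve u)
  have hwu' : s(u', w) = e u' := hu' ▸ Sym2.other_spec (hve u')
  have hee : e u = e u' := by
    by_contra hne
    exact (h.1 (i u)).2 _ (he u) _ (hii ▸ he u') hne w
      ⟨hwu ▸ Sym2.mem_mk_right u w, hwu' ▸ Sym2.mem_mk_right u' w⟩
  exact Sym2.congr_left.1 (hwu.trans (hee.trans hwu'.symm))

end NAF

section StarMap

variable {V : Type*} [Fintype V] [DecidableEq V]

def starLeaves (c : V → V) (x : V) : Finset V := {u | u ≠ x ∧ c u = x}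

def uncovered (c : V → V) : Finset V := {x | c x = x ∧ ∀ u, c u = x → u = x}

def misaligned (f c : V → V) : Finset V := {x | c x ≠ x ∧ c x ≠ f x}

/-- A star forest with at most `k` leaves per star, encoded by the map sending every vertex to
the centre of its star. Centres are fixed points; a fixed point that is nobody's centre is a
trivial one-vertex star, i.e. an `uncovered` vertex. -/
structure IsStarMap (G : SimpleGraph V) (k : ℕ) (c : V → V) : Prop where
  adj : ∀ v, c v ≠ v → G.Adj v (c v)
  idem : ∀ v, c (c v) = c v
  card_starLeaves_le : ∀ x, #(starLeaves c x) ≤ k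

variable {G : SimpleGraph V} {k : ℕ} {c f : V → V} {u v w x : V}

@[simp] lemma mem_starLeaves : u ∈ starLeaves c x ↔ u ≠ x ∧ c u = x := by
  simp [starLeaves]

@[simp] lemma mem_uncovered : x ∈ uncovered c ↔ c x = x ∧ ∀ u, c u = x → u = x := by
  simp [uncovered]

@[simp] lemma mem_misaligned : x ∈ misaligned f c ↔ c x ≠ x ∧ c x ≠ f x := by
  simp [misaligned]

lemma isStarMap_id : IsStarMap G k id :=
  ⟨fun _ h => (h rfl).elim, fun _ => rfl, fun _ => by simp [starLeaves]⟩

lemma IsStarMap.starLeaves_eq_empty (hc : IsStarMap G k c) (hx : c x ≠ x) :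
    starLeaves c x = ∅ := by
  refine eq_empty_of_forall_notMem fun u hu => hx ?_
  rw [← (mem_starLeaves.1 hu).2, hc.idem]

lemma starLeaves_update_self : starLeaves (update c u u) x = (starLeaves c x).erase u := by
  ext y; simp only [mem_starLeaves, mem_erase, update_apply]; grind

lemma IsStarMap.detach (hc : IsStarMap G k c) : IsStarMap G k (update c u u) where
  adj y hy := by
    rw [update_apply] at hy ⊢
    split_ifs at hy ⊢ with h
    · exact (hy h.symm).elim
    · exact hc.adj y hy
  idem y := by
    have := hc.idem u
    have := hc.idem y
    simp only [update_apply]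
    grind
  card_starLeaves_le x := by
    rw [starLeaves_update_self]; exact card_erase_le.trans (hc.card_starLeaves_le x)

lemma uncovered_subset_update_self : uncovered c ⊆ uncovered (update c u u) := by
  intro y
  simp only [mem_uncovered, update_apply]
  grind

lemma uncovered_update_self_subset :
    uncovered (update c u u) ⊆ insert u (insert (c u) (uncovered c)) := by
  intro y
  simp only [mem_uncovered, update_apply, mem_insert]
  grind

lemma misaligned_update_self : misaligned f (update c u u) = (misaligned f c).erase u := by
  ext y; simp only [mem_misaligned, mem_erase, update_apply]; grind

lemma starLeaves_update_subset : starLeaves (update c v w) x ⊆ insert v (starLeaves c x) := by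
  intro y; simp only [mem_starLeaves, update_apply, mem_insert]; grind

lemma IsStarMap.attach (hc : IsStarMap G k c) (hv : v ∈ uncovered c) (hw : c w = w)
    (hvw : G.Adj v w) (hlt : #(starLeaves c w) < k) : IsStarMap G k (update c v w) where
  adj y hy := by
    rw [update_apply] at hy ⊢
    split_ifs at hy ⊢ with h
    · exact h ▸ hvw
    · exact hc.adj y hy
  idem y := by
    rw [mem_uncovered] at hv
    have := hc.idem y
    have := hv.2 (c y)
    simp only [update_apply]
    grind
  card_starLeaves_le x := by
    rw [mem_uncovered] at hv
    by_cases hx : x = w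
    · subst hx
      exact (card_le_card starLeaves_update_subset).trans ((card_insert_le _ _).trans hlt)
    · refine (card_le_card ?_).trans (hc.card_starLeaves_le x)
      intro y; simp only [mem_starLeaves, update_apply]; grind

lemma uncovered_update (hv : v ∈ uncovered c) (hvw : v ≠ w) :
    uncovered (update c v w) = ((uncovered c).erase v).erase w := by
  rw [mem_uncovered] at hv
  ext y
  simp only [mem_uncovered, update_apply, mem_erase]
  constructor
  · intro h
    have := h.2 v
    grind
  · grind

lemma misaligned_update_subset : misaligned f (update c v w) ⊆ insert v (misaligned f c) := by
  intro y; simp only [mem_misaligned, update_apply, mem_insert]; grind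

lemma misaligned_update_subset_of_apply_eq (h : f v = w) :
    misaligned f (update c v w) ⊆ misaligned f c := by
  intro y; simp only [mem_misaligned, update_apply]; grind

def starPotential (f c : V → V) : ℕ := 2 * #(uncovered c) + #(misaligned f c)

variable {c' : V → V}

lemma starPotential_lt_of_uncovered_subset_erase (hv : v ∈ uncovered c)
    (hunc : uncovered c' ⊆ (uncovered c).erase v)
    (hmis : misaligned f c' ⊆ insert u (misaligned f c)) :
    starPotential f c' < starPotential f c := by
  have := card_erase_add_one hv
  have := card_le_card hunc
  have := (card_le_card hmis).trans (card_insert_le _ _)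
  unfold starPotential
  omega

lemma starPotential_lt_of_misaligned_subset_erase (hv : v ∈ uncovered c)
    (hu : u ∈ misaligned f c)
    (hunc : uncovered c' ⊆ insert u ((uncovered c).erase v))
    (hmis : misaligned f c' ⊆ (misaligned f c).erase u) :
    starPotential f c' < starPotential f c := by
  have := card_erase_add_one hv
  have := card_erase_add_one hu
  have := (card_le_card hunc).trans (card_insert_le _ _)
  have := card_le_card hmis
  unfold starPotential
  omega

-- At most `k - 1` vertices other than `v` are sent to `w` by `f`.
lemma exists_mem_starLeaves_apply_ne (hload : #{u | f u = w} ≤ k) (hfv : f v = w)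
    (hv : v ∉ starLeaves c w) (hk : k ≤ #(starLeaves c w)) :
    ∃ u ∈ starLeaves c w, f u ≠ w := by
  by_contra! h
  have hsub : starLeaves c w ⊆ ({u | f u = w} : Finset V).erase v := fun u hu =>
    mem_erase.2 ⟨fun huv => hv (huv ▸ hu), by simpa using h u hu⟩
  have := card_erase_add_one (s := ({u | f u = w} : Finset V)) (a := v) (by simpa using hfv)
  have := card_le_card hsub
  omega

lemma IsStarMap.exists_starPotential_lt_of_center (hc : IsStarMap G k c) (hf : IsNAF G f)
    (hload : ∀ y, #{u | f u = y} ≤ k) (hv : v ∈ uncovered c) (hw : c (f v) = f v) :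
    ∃ c', IsStarMap G k c' ∧ starPotential f c' < starPotential f c := by
  set w := f v
  have hvw : v ≠ w := (hf v).ne
  by_cases hlt : #(starLeaves c w) < k
  · refine ⟨update c v w, hc.attach hv hw (hf v) hlt,
      starPotential_lt_of_uncovered_subset_erase hv ?_
        ((misaligned_update_subset_of_apply_eq (w := w) rfl).trans (subset_insert v _))⟩
    rw [uncovered_update hv hvw]
    exact erase_subset _ _
  -- The star at `w` is full, so trade one of its misaligned leaves for `v`.
  obtain ⟨u, hu, hfu⟩ := exists_mem_starLeaves_apply_ne (hload w) rfl
    (fun h => hvw ((mem_uncovered.1 hv).1.symm.trans (mem_starLeaves.1 h).2)) (not_lt.1 hlt)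
  obtain ⟨huw, hcu⟩ := mem_starLeaves.1 hu
  have hv₁ : v ∈ uncovered (update c u u) := uncovered_subset_update_self hv
  have hw₁ : update c u u w = w := by rw [update_of_ne huw.symm, hw]
  have hlt₁ : #(starLeaves (update c u u) w) < k := by
    rw [starLeaves_update_self]
    have := card_erase_add_one hu
    have := hc.card_starLeaves_le w
    omega
  refine ⟨update (update c u u) v w, hc.detach.attach hv₁ hw₁ (hf v) hlt₁,
    starPotential_lt_of_misaligned_subset_erase hv
      (mem_misaligned.2 ⟨hcu ▸ huw.symm, hcu ▸ hfu.symm⟩) (fun x hx => ?_)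
      (misaligned_update_self (c := c) ▸ misaligned_update_subset_of_apply_eq rfl)⟩
  rw [uncovered_update hv₁ hvw] at hx
  have := uncovered_update_self_subset (mem_of_mem_erase (mem_of_mem_erase hx))
  simp only [mem_erase, mem_insert] at hx this ⊢
  grind

lemma IsStarMap.exists_starPotential_lt_of_leaf (hc : IsStarMap G k c) (hf : IsNAF G f)
    (hk : 2 ≤ k) (hv : v ∈ uncovered c) (hw : c (f v) ≠ f v) :
    ∃ c', IsStarMap G k c' ∧ starPotential f c' < starPotential f c := by
  set w := f v
  set y := c w
  have hvw : v ≠ w := (hf v).ne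
  have hvy : v ≠ y := fun h => hvw ((mem_uncovered.1 hv).2 w h.symm).symm
  have hv₁ : v ∈ uncovered (update c w w) := uncovered_subset_update_self hv
  have hw₁ : update c w w w = w := update_self w w c
  have hleaves₁ : starLeaves (update c w w) w = ∅ := by
    rw [starLeaves_update_self, hc.starLeaves_eq_empty hw, erase_empty]
  have hmis₁ : misaligned f (update c w w) ⊆ misaligned f c :=
    misaligned_update_self (c := c) (f := f) (u := w) ▸ erase_subset _ _
  by_cases hy₁ : y ∈ uncovered (update c w w)
  · -- `w` was the only leaf of `y`: re-centre the star `{y, w}` at `w` and attach `v` there.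
    have hc₂ : IsStarMap G k (update (update c w w) y w) :=
      hc.detach.attach hy₁ hw₁ (hc.adj w hw).symm (by rw [hleaves₁, card_empty]; omega)
    have hv₂ : v ∈ uncovered (update (update c w w) y w) := by
      rw [uncovered_update hy₁ hw]; simp [hv₁, hvy, hvw]
    have hw₂ : update (update c w w) y w w = w := by rw [update_of_ne hw.symm, hw₁]
    have hlt₂ : #(starLeaves (update (update c w w) y w) w) < k := by
      have := (card_le_card (starLeaves_update_subset (c := update c w w) (v := y) (w := w)
        (x := w))).trans (card_insert_le _ _)
      rw [hleaves₁, card_empty] at this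
      omega
    refine ⟨update (update (update c w w) y w) v w, hc₂.attach hv₂ hw₂ (hf v) hlt₂,
      starPotential_lt_of_uncovered_subset_erase hv (fun x hx => ?_)
        ((misaligned_update_subset_of_apply_eq (w := w) rfl).trans
          (misaligned_update_subset.trans (insert_subset_insert y hmis₁)))⟩
    rw [uncovered_update hv₂ hvw, uncovered_update hy₁ hw] at hx
    have := uncovered_update_self_subset (mem_of_mem_erase (mem_of_mem_erase
      (mem_of_mem_erase (mem_of_mem_erase hx))))
    simp only [mem_erase, mem_insert] at hx this ⊢
    grind
  · -- `y` keeps another leaf, so detaching `w` and attaching `v` to it uncovers nothing.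
    refine ⟨update (update c w w) v w,
      hc.detach.attach hv₁ hw₁ (hf v) (by rw [hleaves₁, card_empty]; omega),
      starPotential_lt_of_uncovered_subset_erase (u := v) hv (fun x hx => ?_)
        (((misaligned_update_subset_of_apply_eq (w := w) rfl).trans hmis₁).trans
          (subset_insert v _))⟩
    rw [uncovered_update hv₁ hvw] at hx
    have := uncovered_update_self_subset (mem_of_mem_erase (mem_of_mem_erase hx))
    have hxy : x ≠ y := fun h => hy₁ (h ▸ mem_of_mem_erase (mem_of_mem_erase hx))
    simp only [mem_erase, mem_insert] at hx this ⊢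
    grind

theorem exists_isStarMap_uncovered_eq_empty (hf : IsNAF G f) (hload : ∀ y, #{u | f u = y} ≤ k)
    (hk : 2 ≤ k) : ∃ c, IsStarMap G k c ∧ uncovered c = ∅ := by
  obtain ⟨c, hc, hmin⟩ := (measure (starPotential f)).wf.has_min {c | IsStarMap G k c}
    ⟨id, isStarMap_id⟩
  refine ⟨c, hc, eq_empty_of_forall_notMem fun v hv => ?_⟩
  obtain ⟨c', hc', hlt⟩ :
      ∃ c', IsStarMap G k c' ∧ starPotential f c' < starPotential f c := by
    by_cases hw : c (f v) = f v
    · exact hc.exists_starPotential_lt_of_center hf hload hv hw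
    · exact hc.exists_starPotential_lt_of_leaf hf hk hv hw
  exact hmin c' hc' hlt

theorem IsStarMap.exists_isMatchingCover (hc : IsStarMap G k c) (hcov : uncovered c = ∅) :
    ∃ Ms, IsMatchingCover G k Ms := by
  choose φ hφinj hφlt using fun x => (starLeaves c x).exists_injOn_lt_card
  have hlt (u : V) (hu : c u ≠ u) : φ (c u) u < k :=
    (hφlt _ u (mem_starLeaves.2 ⟨Ne.symm hu, rfl⟩)).trans_le (hc.card_starLeaves_le _)
  refine ⟨fun i => ({u | c u ≠ u ∧ φ (c u) u = i} : Finset V).image (fun u => s(u, c u)),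
    fun i => ⟨?_, ?_⟩, fun v => ?_⟩
  · simp only [mem_image, mem_filter, mem_univ, true_and]
    rintro _ ⟨u, hu, rfl⟩
    exact hc.adj u hu.1
  · simp only [mem_image, mem_filter, mem_univ, true_and]
    rintro _ ⟨u, hu, rfl⟩ _ ⟨u', hu', rfl⟩ hne x ⟨hx, hx'⟩
    have := hc.idem u
    have := hc.idem u'
    rcases Sym2.mem_iff.1 hx with rfl | rfl <;> rcases Sym2.mem_iff.1 hx' with h | h
    · exact hne (by rw [h])
    · exact hu.1 (by rw [h]; grind)
    · exact hu'.1 (by rw [← h]; grind)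
    · have huu' : u = u' := hφinj (c u) (by simpa using Ne.symm hu.1)
        (by simpa [h] using Ne.symm hu'.1) (by rw [hu.2, h, hu'.2])
      exact hne (by rw [huu'])
  · by_cases hv : c v = v
    · obtain ⟨u, hu, huv⟩ : ∃ u, c u = v ∧ u ≠ v := by
        have : v ∉ uncovered c := hcov ▸ notMem_empty v
        simpa [hv] using this
      have hcu : c u ≠ u := hu ▸ huv.symm
      exact ⟨⟨φ (c u) u, hlt u hcu⟩, s(u, c u), mem_image.2 ⟨u, by simp [hcu], rfl⟩,
        hu ▸ Sym2.mem_mk_right u (c u)⟩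
    · exact ⟨⟨φ (c v) v, hlt v hv⟩, s(v, c v), mem_image.2 ⟨v, by simp [hv], rfl⟩,
        Sym2.mem_mk_left v _⟩

theorem exists_isMatchingCover_of_isNAF (hf : IsNAF G f) (hk : 2 ≤ k) (hload : nafLoad f ≤ k) :
    ∃ Ms, IsMatchingCover G k Ms := by
  obtain ⟨c, hc, hcov⟩ := exists_isStarMap_uncovered_eq_empty hf
    (fun y => (card_fiber_le_nafLoad f y).trans hload) hk
  exact hc.exists_isMatchingCover hcov

end StarMap

/-- For every finite graph with no isolated vertices, the minimum NAF load equals the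
matching cover number, unless the minimum NAF load equals `1`, in which case the
matching cover number is `1` or `2`. -/
theorem minNafLoad_eq_matchingCoverNumber {V : Type*} [Fintype V] [DecidableEq V]
    (G : SimpleGraph V) (hiso : ∀ v : V, ∃ w, G.Adj v w) :
    (minNafLoad G ≠ 1 → minNafLoad G = matchingCoverNumber G) ∧
    (minNafLoad G = 1 → matchingCoverNumber G = 1 ∨ matchingCoverNumber G = 2) := by
  obtain ⟨f, hf, hfm⟩ := exists_nafLoad_eq_minNafLoad hiso
  obtain ⟨Ms, hMs⟩ := exists_isMatchingCover_of_isNAF hf (le_max_right _ 2) (le_max_left _ 2)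
  have hmc_le : matchingCoverNumber G ≤ max (minNafLoad G) 2 := hfm ▸ matchingCoverNumber_le hMs
  obtain ⟨Mc, hMc⟩ := hMs.exists_matchingCoverNumber
  obtain ⟨g, hg, hgk⟩ := hMc.exists_isNAF_nafLoad_le
  have hle : minNafLoad G ≤ matchingCoverNumber G := (minNafLoad_le hg).trans hgk
  rcases isEmpty_or_nonempty V with _ | ⟨⟨v⟩⟩
  · have := matchingCoverNumber_eq_zero_of_isEmpty G
    omega
  · have := hfm ▸ one_le_nafLoad f v
    have : 0 < matchingCoverNumber G := (hMc.2 v).choose.pos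
    omega
end
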